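/- arXiv:2507.17231 — 7 statements merged into one kernel-verified Lean document; each statement's English description precedes it below -/
import Mathlib

section
/- For the degree sequence d^{e,q} = (0, q+1, q+2, ..., q+e) and any p with 1 ≤ p ≤ e, the normalized pure Betti number κ_{p,q}(d^{e,q}) := ∏_{1 ≤ k ≤ e, k ≠ p} (q+k)/|k-p| equals C(p+q-1, q) · C(e+q, p+q). -/
/-!
Away from `k = p`, the numerators `q + k` multiply to `(e + q)! / (q! (q + p))` and the
distances `|k - p|` to `(p - 1)! (e - p)!`; expanding both binomial coefficients into factorials
gives the same quotient.
-/

open Finset Nat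

theorem Finset.prod_Icc_erase_eq_prod_Ico_mul_prod_Ioc {α M : Type*}
    [LinearOrder α] [LocallyFiniteOrder α] [CommMonoid M] {a b c : α}
    (hab : a ≤ b) (hbc : b ≤ c) (f : α → M) :
    ∏ x ∈ (Icc a c).erase b, f x = (∏ x ∈ Ico a b, f x) * ∏ x ∈ Ioc b c, f x := by
  rw [← prod_union (disjoint_left.2 fun x hx hx' => lt_asymm (mem_Ico.1 hx).2 (mem_Ioc.1 hx').1)]
  congr 1
  ext x
  simp only [mem_erase, mem_Icc, mem_union, mem_Ico, mem_Ioc]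
  grind

theorem factorial_mul_prod_Icc_add (q e : ℕ) : q ! * ∏ k ∈ Icc 1 e, (q + k) = (q + e)! := by
  induction e with
  | zero => simp
  | succ e ih =>
    rw [prod_Icc_succ_top (by omega), ← mul_assoc, ih, ← add_assoc, factorial_succ, mul_comm]

theorem prod_Ico_one_sub_eq_factorial (p : ℕ) : ∏ k ∈ Ico 1 p, (p - k) = (p - 1)! := by
  rcases p with _ | p
  · simp
  · exact (prod_Ico_reflect id 1 (m := p + 1) (n := p + 1) (by omega)).trans
      (by simp [prod_Ico_id_eq_factorial])

theorem prod_Ioc_sub_eq_factorial (p e : ℕ) : ∏ k ∈ Ioc p e, (k - p) = (e - p)! := by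
  rw [← Ico_add_one_add_one_eq_Ioc, prod_Ico_eq_prod_range, ← prod_range_add_one_eq_factorial]
  exact prod_congr (by congr 1; omega) fun i _ => by omega

theorem choose_mul_choose_mul_factorials {e p q : ℕ} (hp : 1 ≤ p) (hpe : p ≤ e) :
    (p + q - 1).choose q * (e + q).choose (p + q) * (q ! * (p + q) * (p - 1)! * (e - p)!) =
      (e + q)! := by
  have hlow := choose_mul_factorial_mul_factorial (show q ≤ p + q - 1 by omega)
  have hhigh := choose_mul_factorial_mul_factorial (show p + q ≤ e + q by omega)
  rw [show p + q - 1 - q = p - 1 by omega] at hlow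
  rw [show e + q - (p + q) = e - p by omega] at hhigh
  have hsucc : (p + q)! = (p + q - 1)! * (p + q) := by
    conv_lhs => rw [show p + q = p + q - 1 + 1 by omega]
    rw [factorial_succ, mul_comm, show p + q - 1 + 1 = p + q by omega]
  rw [← hhigh, hsucc, ← hlow]
  ring

theorem prod_erase_abs_sub_eq_factorial_mul_factorial {K : Type*} [Field K] [LinearOrder K]
    [IsStrictOrderedRing K] {e p : ℕ} (hp : 1 ≤ p) (hpe : p ≤ e) :
    ∏ k ∈ (Icc 1 e).erase p, |(k : K) - p| = ((p - 1)! : K) * (e - p)! := by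
  rw [prod_Icc_erase_eq_prod_Ico_mul_prod_Ioc hp hpe, ← prod_Ico_one_sub_eq_factorial,
    ← prod_Ioc_sub_eq_factorial, Nat.cast_prod, Nat.cast_prod]
  congr 1
  · refine prod_congr rfl fun k hk => ?_
    have hkp : k ≤ p := (mem_Ico.1 hk).2.le
    rw [abs_sub_comm, abs_of_nonneg (sub_nonneg.2 (by exact_mod_cast hkp)), Nat.cast_sub hkp]
  · refine prod_congr rfl fun k hk => ?_
    have hpk : p ≤ k := (mem_Ioc.1 hk).1.le
    rw [abs_of_nonneg (sub_nonneg.2 (by exact_mod_cast hpk)), Nat.cast_sub hpk]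

theorem stmt_0_general (e q p : ℕ) (hp1 : 1 ≤ p) (hpe : p ≤ e) :
    ∏ k ∈ (Finset.Icc 1 e).erase p, (((q : ℚ) + k) / |(k : ℚ) - p|) =
      (Nat.choose (p + q - 1) q : ℚ) * Nat.choose (e + q) (p + q) := by
  have hnum : q ! * (p + q) * ∏ k ∈ (Icc 1 e).erase p, (q + k) = (e + q)! := by
    rw [mul_assoc, add_comm p q, mul_comm (q + p), prod_erase_mul _ _ (mem_Icc.2 ⟨hp1, hpe⟩),
      factorial_mul_prod_Icc_add, add_comm]
  rw [← choose_mul_choose_mul_factorials hp1 hpe] at hnum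
  have hnumQ := congrArg (Nat.cast : ℕ → ℚ) hnum
  have hpos : ((q ! * (p + q) : ℕ) : ℚ) ≠ 0 := by positivity
  push_cast at hnumQ hpos
  rw [prod_div_distrib, prod_erase_abs_sub_eq_factorial_mul_factorial hp1 hpe,
    div_eq_iff (by positivity)]
  apply mul_left_cancel₀ hpos
  linear_combination hnumQ

/-- For the degree sequence `d^{e,q} = (0, q+1, ..., q+e)` and `1 ≤ p ≤ e`, the normalized
pure Betti number `κ_{p,q}(d^{e,q}) = ∏_{1 ≤ k ≤ e, k ≠ p} (q+k)/|k-p|` equals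
`C(p+q-1,q) * C(e+q,p+q)`. -/
theorem stmt_0 (e q p : ℕ) (he : 1 ≤ e) (hq : 1 ≤ q) (hp1 : 1 ≤ p) (hpe : p ≤ e) :
    ∏ k ∈ (Finset.Icc 1 e).erase p, (((q : ℚ) + k) / |(k : ℚ) - p|) =
      (Nat.choose (p + q - 1) q : ℚ) * Nat.choose (e + q) (p + q) :=
  stmt_0_general e q p hp1 hpe
end

section
/- Let d = (0, d_1, ..., d_e) be a strictly increasing sequence of integers with d_1 ≥ q+1, where e ≥ 1 and q ≥ 1, and let p with 1 ≤ p ≤ e satisfy d_p = q+p. Then κ_{p,q}(d) := ∏_{1 ≤ k ≤ e, k ≠ p} d_k/|d_k - d_p| ≤ C(p+q-1, q) · C(e+q, p+q), with equality if and only if d_k = q+k for all 1 ≤ k ≤ e. -/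
private lemma auxA (c : ℕ) : ∀ n : ℕ,
    c.factorial * ∏ j ∈ Finset.Ico 1 (n + 1), (c + j) = (c + n).factorial := by
  intro n
  induction n with
  | zero => simp
  | succ n ih =>
    rw [Finset.prod_Ico_succ_top (by omega), ← mul_assoc, ih]
    have h : c + (n + 1) = (c + n) + 1 := by omega
    rw [h, Nat.factorial_succ]
    ring

private lemma auxC (p : ℕ) (hp : 1 ≤ p) :
    ∏ k ∈ Finset.Ico 1 p, (p - k) = (p - 1).factorial := by
  have h1 : ∏ k ∈ Finset.Ico 1 p, (p - k) = ∏ k ∈ Finset.Ico 1 p, k := by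
    refine Finset.prod_nbij' (fun k => p - k) (fun k => p - k) ?_ ?_ ?_ ?_ ?_
    all_goals
      intro a ha
      simp only [Finset.mem_Ico] at ha
      try simp only [Finset.mem_Ico]
      try omega
  rw [h1]
  have h2 : p = (p - 1) + 1 := by omega
  conv_lhs => rw [h2]
  rw [Finset.prod_Ico_id_eq_factorial]

/-- If `d = (0, d_1, ..., d_e)` is strictly increasing with `d_1 ≥ q+1` (`e, q ≥ 1`), and
`d_p = q + p` for some `1 ≤ p ≤ e`, then
`κ_{p,q}(d) = ∏_{1 ≤ k ≤ e, k ≠ p} d_k/|d_k - d_p| ≤ C(p+q-1,q)·C(e+q,p+q)`, with equality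
iff `d_k = q + k` for all `1 ≤ k ≤ e`. -/
theorem stmt_4 (e q p : ℕ) (he : 1 ≤ e) (hq : 1 ≤ q) (hp1 : 1 ≤ p) (hpe : p ≤ e)
    (d : ℕ → ℤ) (hd0 : d 0 = 0) (hmono : ∀ k < e, d k < d (k + 1))
    (hd1 : (q : ℤ) + 1 ≤ d 1) (hdp : d p = (q : ℤ) + p) :
    ∏ k ∈ (Finset.Icc 1 e).erase p, ((d k : ℚ) / |(d k : ℚ) - (d p : ℚ)|) ≤
      (Nat.choose (p + q - 1) q : ℚ) * Nat.choose (e + q) (p + q)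
    ∧ (∏ k ∈ (Finset.Icc 1 e).erase p, ((d k : ℚ) / |(d k : ℚ) - (d p : ℚ)|) =
        (Nat.choose (p + q - 1) q : ℚ) * Nat.choose (e + q) (p + q)
        ↔ ∀ k ∈ Finset.Icc 1 e, d k = (q : ℤ) + k) := by
  -- step lemma: increments
  have hstep : ∀ b, b ≤ e → ∀ a, a ≤ b → d a + ((b : ℤ) - (a : ℤ)) ≤ d b := by
    intro b
    induction b with
    | zero => intro _ a ha; interval_cases a; simp
    | succ n ih =>
      intro hbe a ha
      rcases Nat.lt_or_ge a (n + 1) with h | h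
      · have h1 := hmono n (by omega)
        have h2 := ih (by omega) a (by omega)
        push_cast at *
        try omega
      · have : a = n + 1 := by omega
        subst this; simp
  -- lower bound d k ≥ q + k
  have hlow : ∀ k, 1 ≤ k → k ≤ e → (q : ℤ) + k ≤ d k := by
    intro k h1 h2
    have := hstep k h2 1 h1
    push_cast at this ⊢
    try omega
  -- for k ≤ p, d k = q + k
  have heqp : ∀ k, 1 ≤ k → k ≤ p → d k = (q : ℤ) + k := by
    intro k h1 h2
    have h3 := hstep p hpe k h2
    have h4 := hlow k h1 (h2.trans hpe)
    rw [hdp] at h3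
    push_cast at *
    try omega
  -- key rational lemma
  have key : ∀ a b c : ℚ, 0 < c → c < b → b ≤ a →
      a / (a - c) ≤ b / (b - c) ∧ (a / (a - c) = b / (b - c) ↔ a = b) := by
    intro a b c hc hcb hba
    have hb : 0 < b - c := by linarith
    have ha : 0 < a - c := by linarith
    refine ⟨?_, ?_⟩
    · rw [div_le_div_iff₀ ha hb]; nlinarith
    · rw [div_eq_div_iff (ne_of_gt ha) (ne_of_gt hb)]
      constructor
      · intro h
        have h2 : a * c = b * c := by nlinarith
        exact mul_right_cancel₀ (ne_of_gt hc) h2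
      · intro h; rw [h]
  -- split the index set
  have hdisj : Disjoint (Finset.Ico 1 p) (Finset.Ioc p e) := by
    rw [Finset.disjoint_left]
    intro k hk hk'
    simp only [Finset.mem_Ico, Finset.mem_Ioc] at *
    try omega
  have hsplit : (Finset.Icc 1 e).erase p = Finset.Ico 1 p ∪ Finset.Ioc p e := by
    ext k
    simp only [Finset.mem_erase, Finset.mem_Icc, Finset.mem_union, Finset.mem_Ico,
      Finset.mem_Ioc]
    try omega
  rw [hsplit, Finset.prod_union hdisj]
  -- first product equals C(p+q-1, q)
  have hP1 : ∏ k ∈ Finset.Ico 1 p, ((d k : ℚ) / |(d k : ℚ) - (d p : ℚ)|)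
      = (Nat.choose (p + q - 1) q : ℚ) := by
    have hcongr : ∀ k ∈ Finset.Ico 1 p, ((d k : ℚ) / |(d k : ℚ) - (d p : ℚ)|)
        = (((q + k : ℕ) : ℚ)) / ((p - k : ℕ) : ℚ) := by
      intro k hk
      simp only [Finset.mem_Ico] at hk
      rw [heqp k hk.1 (by omega), hdp]
      have habs : |((((q : ℤ) + k : ℤ)) : ℚ) - (((q : ℤ) + p : ℤ) : ℚ)| = ((p - k : ℕ) : ℚ) := by
        push_cast [Nat.le_of_lt hk.2]
        rw [abs_of_nonpos (by
          have : (k : ℚ) ≤ (p : ℚ) := by exact_mod_cast Nat.le_of_lt hk.2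
          linarith)]
        ring
      rw [habs]
      push_cast
      ring
    rw [Finset.prod_congr rfl hcongr, Finset.prod_div_distrib, ← Nat.cast_prod, ← Nat.cast_prod]
    -- numerator
    have hnum : q.factorial * ∏ k ∈ Finset.Ico 1 p, (q + k) = (p + q - 1).factorial := by
      have h1 : p = (p - 1) + 1 := by omega
      rw [h1, auxA q (p - 1)]
      congr 1
      try omega
    have hden : ∏ k ∈ Finset.Ico 1 p, (p - k) = (p - 1).factorial := auxC p hp1
    have hch : Nat.choose (p + q - 1) q * q.factorial * (p - 1).factorial
        = (p + q - 1).factorial := by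
      have h := Nat.choose_mul_factorial_mul_factorial (n := p + q - 1) (k := q) (by omega)
      have h2 : p + q - 1 - q = p - 1 := by omega
      rw [h2] at h
      exact h
    rw [hden, div_eq_iff (by positivity)]
    have hchQ : (Nat.choose (p + q - 1) q : ℚ) * (q.factorial : ℚ) * ((p - 1).factorial : ℚ)
        = ((p + q - 1).factorial : ℚ) := by exact_mod_cast hch
    have hnumQ : (q.factorial : ℚ) * ((∏ k ∈ Finset.Ico 1 p, (q + k) : ℕ) : ℚ)
        = ((p + q - 1).factorial : ℚ) := by exact_mod_cast hnum
    have hqf : (q.factorial : ℚ) ≠ 0 := by positivity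
    apply mul_left_cancel₀ hqf
    rw [hnumQ]
    linear_combination -hchQ
  -- second product : pointwise facts
  set g : ℕ → ℚ := fun k => ((q + k : ℕ) : ℚ) / ((k - p : ℕ) : ℚ) with hg
  have hpt : ∀ k ∈ Finset.Ioc p e,
      (0 < (d k : ℚ) / |(d k : ℚ) - (d p : ℚ)|) ∧
      ((d k : ℚ) / |(d k : ℚ) - (d p : ℚ)| ≤ g k) ∧
      ((d k : ℚ) / |(d k : ℚ) - (d p : ℚ)| = g k ↔ d k = (q : ℤ) + k) := by
    intro k hk
    simp only [Finset.mem_Ioc] at hk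
    have hdk : (q : ℤ) + k ≤ d k := hlow k (by omega) hk.2
    have hb : ((q : ℚ) + p) < (q : ℚ) + k := by
      have : (p : ℚ) < (k : ℚ) := by exact_mod_cast hk.1
      linarith
    have hba : ((q : ℚ) + k) ≤ (d k : ℚ) := by exact_mod_cast hdk
    have hc : (0 : ℚ) < (q : ℚ) + p := by positivity
    have habs : |(d k : ℚ) - (d p : ℚ)| = (d k : ℚ) - ((q : ℚ) + p) := by
      rw [hdp]
      push_cast
      rw [abs_of_nonneg (by linarith)]
    have hgk : g k = ((q : ℚ) + k) / (((q : ℚ) + k) - ((q : ℚ) + p)) := by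
      rw [hg]
      have h1 : ((k - p : ℕ) : ℚ) = (k : ℚ) - (p : ℚ) := by
        push_cast [Nat.le_of_lt hk.1]; ring
      simp only
      rw [h1]
      push_cast
      ring_nf
    have hkey := key (d k : ℚ) ((q : ℚ) + k) ((q : ℚ) + p) hc hb hba
    rw [habs, hgk]
    refine ⟨?_, hkey.1, ?_⟩
    · apply div_pos <;> linarith
    · rw [hkey.2]
      constructor
      · intro h; exact_mod_cast h
      · intro h; exact_mod_cast congrArg (Int.cast : ℤ → ℚ) h
  -- value of ∏ g
  have hGval : ∏ k ∈ Finset.Ioc p e, g k = (Nat.choose (e + q) (p + q) : ℚ) := by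
    have hnum : ∏ k ∈ Finset.Ioc p e, (q + k) = ∏ j ∈ Finset.Ico 1 (e - p + 1), (q + p + j) := by
      refine Finset.prod_nbij' (fun k => k - p) (fun j => p + j) ?_ ?_ ?_ ?_ ?_
      all_goals
        intro a ha
        simp only [Finset.mem_Ioc, Finset.mem_Ico] at ha
        try simp only [Finset.mem_Ioc, Finset.mem_Ico]
        try omega
    have hden : ∏ k ∈ Finset.Ioc p e, (k - p) = (e - p).factorial := by
      have h1 : ∏ k ∈ Finset.Ioc p e, (k - p) = ∏ j ∈ Finset.Ico 1 (e - p + 1), j := by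
        refine Finset.prod_nbij' (fun k => k - p) (fun j => p + j) ?_ ?_ ?_ ?_ ?_
        all_goals
          intro a ha
          simp only [Finset.mem_Ioc, Finset.mem_Ico] at ha
          try simp only [Finset.mem_Ioc, Finset.mem_Ico]
          try omega
      rw [h1, Finset.prod_Ico_id_eq_factorial]
    have hnum2 : (q + p).factorial * ∏ k ∈ Finset.Ioc p e, (q + k) = (e + q).factorial := by
      rw [hnum, auxA (q + p) (e - p)]
      congr 1
      try omega
    have hch : Nat.choose (e + q) (p + q) * (p + q).factorial * (e - p).factorial
        = (e + q).factorial := by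
      have h := Nat.choose_mul_factorial_mul_factorial (n := e + q) (k := p + q) (by omega)
      have h2 : e + q - (p + q) = e - p := by omega
      rw [h2] at h
      exact h
    have hgc : ∀ k ∈ Finset.Ioc p e, g k = ((q + k : ℕ) : ℚ) / ((k - p : ℕ) : ℚ) := by
      intro k _; rfl
    rw [Finset.prod_congr rfl hgc, Finset.prod_div_distrib, ← Nat.cast_prod, ← Nat.cast_prod,
      hden, div_eq_iff (by positivity)]
    have hA : ((q + p).factorial : ℚ) * ((∏ k ∈ Finset.Ioc p e, (q + k) : ℕ) : ℚ)
        = ((e + q).factorial : ℚ) := by exact_mod_cast hnum2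
    have hB : (Nat.choose (e + q) (p + q) : ℚ) * ((p + q).factorial : ℚ)
        * ((e - p).factorial : ℚ) = ((e + q).factorial : ℚ) := by exact_mod_cast hch
    have hpq : ((p + q).factorial : ℚ) = ((q + p).factorial : ℚ) := by rw [add_comm]
    have hqp0 : ((q + p).factorial : ℚ) ≠ 0 := by positivity
    rw [hpq] at hB
    apply mul_left_cancel₀ hqp0
    rw [hA]
    linear_combination -hB
  -- positivity and inequalities for the second product
  have hle2 : ∏ k ∈ Finset.Ioc p e, ((d k : ℚ) / |(d k : ℚ) - (d p : ℚ)|)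
      ≤ ∏ k ∈ Finset.Ioc p e, g k :=
    Finset.prod_le_prod (fun k hk => le_of_lt (hpt k hk).1) (fun k hk => (hpt k hk).2.1)
  have hC1pos : (0 : ℚ) < (Nat.choose (p + q - 1) q : ℚ) := by
    exact_mod_cast Nat.choose_pos (by omega)
  constructor
  · rw [hP1]
    calc (Nat.choose (p + q - 1) q : ℚ) *
          ∏ k ∈ Finset.Ioc p e, ((d k : ℚ) / |(d k : ℚ) - (d p : ℚ)|)
        ≤ (Nat.choose (p + q - 1) q : ℚ) * ∏ k ∈ Finset.Ioc p e, g k := by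
          exact mul_le_mul_of_nonneg_left (hle2.trans_eq rfl) (le_of_lt hC1pos)
      _ = (Nat.choose (p + q - 1) q : ℚ) * Nat.choose (e + q) (p + q) := by rw [hGval]
  · rw [hP1]
    constructor
    · intro h
      have hP2 : ∏ k ∈ Finset.Ioc p e, ((d k : ℚ) / |(d k : ℚ) - (d p : ℚ)|)
          = (Nat.choose (e + q) (p + q) : ℚ) :=
        mul_left_cancel₀ (ne_of_gt hC1pos) h
      -- all pointwise equalities hold
      have hall : ∀ k ∈ Finset.Ioc p e, ((d k : ℚ) / |(d k : ℚ) - (d p : ℚ)|) = g k := by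
        by_contra hcon
        push_neg at hcon
        obtain ⟨i, hi, hne⟩ := hcon
        have hlt : ∏ k ∈ Finset.Ioc p e, ((d k : ℚ) / |(d k : ℚ) - (d p : ℚ)|)
            < ∏ k ∈ Finset.Ioc p e, g k :=
          Finset.prod_lt_prod (fun k hk => (hpt k hk).1) (fun k hk => (hpt k hk).2.1)
            ⟨i, hi, lt_of_le_of_ne ((hpt i hi).2.1) hne⟩
        rw [hP2, hGval] at hlt
        exact lt_irrefl _ hlt
      intro k hk
      simp only [Finset.mem_Icc] at hk
      rcases le_or_gt k p with hkp | hkp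
      · exact heqp k hk.1 hkp
      · exact ((hpt k (by simp only [Finset.mem_Ioc]; omega)).2.2).1
          (hall k (by simp only [Finset.mem_Ioc]; omega))
    · intro h
      have hP2 : ∏ k ∈ Finset.Ioc p e, ((d k : ℚ) / |(d k : ℚ) - (d p : ℚ)|)
          = ∏ k ∈ Finset.Ioc p e, g k := by
        refine Finset.prod_congr rfl fun k hk => ?_
        have hk' := hk
        simp only [Finset.mem_Ioc] at hk'
        exact ((hpt k hk).2.2).2 (h k (by simp only [Finset.mem_Icc]; omega))
      rw [hP2, hGval]
end

section
/- For the degree sequence d̃^{e,1} = (0, 2, 3, ..., e-1, e, e+2) of length e ≥ 2, the normalized pure Betti number κ_{p,1}(d̃^{e,1}) := ∏_{1 ≤ k ≤ e, k ≠ p} d_k/|d_k - d_p| (where d_p = p+1 for 1 ≤ p ≤ e-1) equals p·C(e+1, p+1) − C(e, p-1) for all 1 ≤ p ≤ e-1. -/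
lemma prodN (q : ℕ) : ∏ k ∈ Finset.Icc 1 q, ((k:ℚ)+1) = Nat.factorial (q+1) := by
  induction q with
  | zero => simp [Nat.factorial]
  | succ n ih =>
    rw [Finset.prod_Icc_succ_top (by omega), ih]
    rw [Nat.factorial_succ (n+1)]
    push_cast
    ring

lemma prodDnat (q : ℕ) : ∏ k ∈ Finset.Icc 1 q, (q+1-k) = Nat.factorial q := by
  rw [← Finset.prod_Ico_id_eq_factorial q, ← Finset.Ico_add_one_right_eq_Icc 1 q]
  apply Finset.prod_nbij' (fun k => q+1-k) (fun k => q+1-k)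
  all_goals
    intro a ha
    simp only [Finset.mem_Icc, Finset.mem_Ico] at ha
    first
    | omega
    | (simp only [Finset.mem_Icc, Finset.mem_Ico]; omega)

lemma prodD (q : ℕ) : ∏ k ∈ Finset.Icc 1 q, ((q:ℚ)+1-(k:ℚ)) = Nat.factorial q := by
  have h1 : ∀ k ∈ Finset.Icc 1 q, ((q:ℚ)+1-(k:ℚ)) = ((q+1-k : ℕ):ℚ) := by
    intro k hk
    simp only [Finset.mem_Icc] at hk
    have : k ≤ q+1 := by omega
    push_cast [this]
    ring
  rw [Finset.prod_congr rfl h1, ← Nat.cast_prod, prodDnat]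

lemma lemA (q : ℕ) : ∏ k ∈ Finset.Icc 1 q, (((k:ℚ)+1)/((q:ℚ)+1-(k:ℚ))) = (q:ℚ)+1 := by
  rw [Finset.prod_div_distrib, prodN, prodD, Nat.factorial_succ]
  have : (Nat.factorial q : ℚ) ≠ 0 := by positivity
  push_cast
  field_simp

lemma key (q m : ℕ) :
    ∏ k ∈ (Finset.Icc 1 (q+m+2)).erase (q+1),
      ((if k = q+m+2 then (q:ℚ)+(m:ℚ)+4 else (k:ℚ)+1) /
        |(if k = q+m+2 then (q:ℚ)+(m:ℚ)+4 else (k:ℚ)+1) - ((q:ℚ)+2)|) =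
    (Nat.factorial (q+m+2) * ((q:ℚ)+(m:ℚ)+4)) /
      (((q:ℚ)+2) * Nat.factorial q * Nat.factorial m * ((m:ℚ)+2)) := by
  have hq0 : (0:ℚ) ≤ q := Nat.cast_nonneg q
  induction m with
  | zero =>
    have hset : (Finset.Icc 1 (q+0+2)).erase (q+1) = insert (q+2) (Finset.Icc 1 q) := by
      ext k; simp only [Finset.mem_erase, Finset.mem_Icc, Finset.mem_insert]; omega
    rw [hset, Finset.prod_insert (by simp [Finset.mem_Icc])]
    have h2 : ∀ k ∈ Finset.Icc 1 q,
        ((if k = q+0+2 then (q:ℚ)+(0:ℕ)+4 else (k:ℚ)+1) /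
          |(if k = q+0+2 then (q:ℚ)+(0:ℕ)+4 else (k:ℚ)+1) - ((q:ℚ)+2)|)
        = ((k:ℚ)+1)/((q:ℚ)+1-(k:ℚ)) := by
      intro k hk
      simp only [Finset.mem_Icc] at hk
      have hkq : (k:ℚ) ≤ q := by exact_mod_cast hk.2
      rw [if_neg (by omega)]
      congr 1
      rw [abs_of_nonpos (by linarith)]
      ring
    rw [Finset.prod_congr rfl h2, lemA, if_pos rfl,
      abs_of_nonneg (show (0:ℚ) ≤ (q:ℚ)+(0:ℕ)+4 - ((q:ℚ)+2) by push_cast; linarith)]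
    rw [show q+0+2 = q+2 from rfl, Nat.factorial_succ (q+1), Nat.factorial_succ q]
    have : (Nat.factorial q : ℚ) ≠ 0 := by positivity
    push_cast
    field_simp
    ring
  | succ n ih =>
    have hn0 : (0:ℚ) ≤ n := Nat.cast_nonneg n
    push_cast
    have hset : (Finset.Icc 1 (q+(n+1)+2)).erase (q+1)
        = insert (q+n+3) ((Finset.Icc 1 (q+n+2)).erase (q+1)) := by
      ext k; simp only [Finset.mem_erase, Finset.mem_Icc, Finset.mem_insert]; omega
    set g : ℕ → ℚ := fun k =>
      ((if k = q+n+2 then (q:ℚ)+(n:ℚ)+4 else (k:ℚ)+1) /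
        |(if k = q+n+2 then (q:ℚ)+(n:ℚ)+4 else (k:ℚ)+1) - ((q:ℚ)+2)|) with hg
    set g' : ℕ → ℚ := fun k =>
      ((if k = q+(n+1)+2 then (q:ℚ)+((n:ℚ)+1)+4 else (k:ℚ)+1) /
        |(if k = q+(n+1)+2 then (q:ℚ)+((n:ℚ)+1)+4 else (k:ℚ)+1) - ((q:ℚ)+2)|) with hg'
    have vg : g (q+n+2) = ((q:ℚ)+(n:ℚ)+4) / ((n:ℚ)+2) := by
      simp only [hg, if_pos]
      rw [abs_of_nonneg (by linarith), div_eq_div_iff (ne_of_gt (by linarith)) (by positivity)]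
      ring
    have vg' : g' (q+n+2) = ((q:ℚ)+(n:ℚ)+3) / ((n:ℚ)+1) := by
      simp only [hg', if_neg (show q+n+2 ≠ q+(n+1)+2 by omega)]
      push_cast
      rw [abs_of_nonneg (by linarith), div_eq_div_iff (ne_of_gt (by linarith)) (by positivity)]
      ring
    have vtop : g' (q+n+3) = ((q:ℚ)+(n:ℚ)+5) / ((n:ℚ)+3) := by
      simp only [hg', if_pos (show q+n+3 = q+(n+1)+2 by omega)]
      rw [abs_of_nonneg (by linarith), div_eq_div_iff (ne_of_gt (by linarith)) (by positivity)]
      ring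
    have hmem : q+n+2 ∈ (Finset.Icc 1 (q+n+2)).erase (q+1) := by
      simp only [Finset.mem_erase, Finset.mem_Icc]; omega
    have hagree : ∀ k ∈ ((Finset.Icc 1 (q+n+2)).erase (q+1)).erase (q+n+2), g' k = g k := by
      intro k hk
      simp only [Finset.mem_erase, Finset.mem_Icc] at hk
      rw [hg, hg']
      simp only [if_neg (show k ≠ q+(n+1)+2 by omega), if_neg (show k ≠ q+n+2 by omega)]
    have hgne : g (q+n+2) ≠ 0 := by
      rw [vg]; positivity
    have hErase : ∏ k ∈ ((Finset.Icc 1 (q+n+2)).erase (q+1)).erase (q+n+2), g k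
        = (∏ k ∈ (Finset.Icc 1 (q+n+2)).erase (q+1), g k) / g (q+n+2) := by
      rw [← Finset.mul_prod_erase _ _ hmem]
      field_simp
    have main : ∏ k ∈ (Finset.Icc 1 (q+(n+1)+2)).erase (q+1), g' k
        = g' (q+n+3) * (g' (q+n+2) *
            ((∏ k ∈ (Finset.Icc 1 (q+n+2)).erase (q+1), g k) / g (q+n+2))) := by
      rw [hset, Finset.prod_insert (by simp only [Finset.mem_erase, Finset.mem_Icc]; omega),
        ← Finset.mul_prod_erase _ _ hmem, Finset.prod_congr rfl hagree, hErase]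
    rw [main, vg, vg', vtop, ih]
    rw [show q+(n+1)+2 = (q+n+2)+1 from rfl, Nat.factorial_succ (q+n+2), Nat.factorial_succ n]
    have h1 : (Nat.factorial q : ℚ) ≠ 0 := by positivity
    have h2 : (Nat.factorial n : ℚ) ≠ 0 := by positivity
    have h3 : (Nat.factorial (q+n+2) : ℚ) ≠ 0 := by positivity
    push_cast
    field_simp
    ring
lemma chooseEq (q m : ℕ) :
    (Nat.factorial (q+m+2) * ((q:ℚ)+(m:ℚ)+4)) /
      (((q:ℚ)+2) * Nat.factorial q * Nat.factorial m * ((m:ℚ)+2)) =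
    ((q:ℚ)+1) * Nat.choose (q+m+3) (q+2) - Nat.choose (q+m+2) q := by
  rw [Nat.cast_choose ℚ (show q+2 ≤ q+m+3 by omega),
      Nat.cast_choose ℚ (show q ≤ q+m+2 by omega),
      show q+m+3 - (q+2) = m+1 by omega, show q+m+2 - q = m+2 by omega,
      show q+m+3 = (q+m+2)+1 from rfl,
      Nat.factorial_succ (q+m+2), Nat.factorial_succ (q+1), Nat.factorial_succ q,
      Nat.factorial_succ (m+1), Nat.factorial_succ m]
  have h1 : (Nat.factorial q : ℚ) ≠ 0 := by positivity
  have h2 : (Nat.factorial m : ℚ) ≠ 0 := by positivity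
  have h3 : (Nat.factorial (q+m+2) : ℚ) ≠ 0 := by positivity
  push_cast
  field_simp
  ring

/-- For the degree sequence `d̃^{e,1} = (0, 2, 3, ..., e, e+2)` of length `e ≥ 2`
(`d_k = k+1` for `1 ≤ k ≤ e-1`, `d_e = e+2`), the normalized pure Betti number
`κ_{p,1}(d̃^{e,1}) = ∏_{1 ≤ k ≤ e, k ≠ p} d_k/|d_k - d_p|` equals
`p·C(e+1,p+1) - C(e,p-1)` for `1 ≤ p ≤ e-1`. -/
theorem stmt_6 (e p : ℕ) (he : 2 ≤ e) (hp1 : 1 ≤ p) (hpe : p ≤ e - 1) :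
    (fun d : ℕ → ℚ =>
        ∏ k ∈ (Finset.Icc 1 e).erase p, (d k / |d k - d p|))
      (fun k => if k = e then (e : ℚ) + 2 else (k : ℚ) + 1) =
      (p : ℚ) * Nat.choose (e + 1) (p + 1) - Nat.choose e (p - 1) := by
  obtain ⟨q, m, rfl, rfl⟩ : ∃ q m, p = q+1 ∧ e = q+m+2 := ⟨p-1, e-1-p, by omega, by omega⟩
  simp only []
  rw [if_neg (show q+1 ≠ q+m+2 by omega)]
  have hcast : ((q+1 : ℕ) : ℚ) + 1 = (q:ℚ) + 2 := by push_cast; ring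
  have hcast2 : ((q+m+2 : ℕ) : ℚ) + 2 = (q:ℚ) + (m:ℚ) + 4 := by push_cast; ring
  rw [hcast, hcast2, key, chooseEq]
  norm_num [show q+m+2+1 = q+m+3 from rfl, show q+1+1 = q+2 from rfl]
end

section
/- Let d = (0, d_1, ..., d_e) be a strictly increasing sequence of integers with d_1 ≥ 2 and d_e ≥ e+2, where e ≥ 2, and suppose d_p = p+1 for some p with 1 ≤ p ≤ e-1. Then κ_{p,1}(d) := ∏_{1 ≤ k ≤ e, k ≠ p} d_k/|d_k − d_p| ≤ p·C(e+1, p+1) − C(e, p-1), with equality if and only if d = (0, 2, 3, ..., e, e+2). -/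
open Finset

private lemma fact_prod (n : ℕ) : ∏ k ∈ Ioc 0 n, (k : ℚ) = n.factorial := by
  induction n with
  | zero => simp
  | succ n ih =>
    rw [Finset.prod_Ioc_succ_top (Nat.zero_le n), ih, Nat.factorial_succ]
    push_cast; ring

private lemma reindex_succ (a b : ℕ) :
    ∏ k ∈ Ioc a b, ((k : ℚ) + 1) = ∏ k ∈ Ioc (a+1) (b+1), (k : ℚ) := by
  apply Finset.prod_nbij' (fun k => k + 1) (fun k => k - 1)
  · intro x hx; simp only [mem_Ioc] at *; omega
  · intro x hx; simp only [mem_Ioc] at *; omega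
  · intro x hx; omega
  · intro x hx; simp only [mem_Ioc] at hx; omega
  · intro x hx; push_cast; ring

private lemma reindex_sub (p b : ℕ) :
    ∏ k ∈ Ioc p (p + b), ((k : ℚ) - p) = ∏ k ∈ Ioc 0 b, (k : ℚ) := by
  apply Finset.prod_nbij' (fun k => k - p) (fun k => k + p)
  · intro x hx; simp only [mem_Ioc] at *; omega
  · intro x hx; simp only [mem_Ioc] at *; omega
  · intro x hx; simp only [mem_Ioc] at hx; omega
  · intro x hx; omega
  · intro x hx; simp only [mem_Ioc] at hx
    have h2 : ((x - p : ℕ) : ℚ) = (x : ℚ) - p := by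
      have h : (x - p) + p = x := by omega
      have := congrArg (Nat.cast : ℕ → ℚ) h
      push_cast at this; linarith
    rw [h2]

private lemma reindex_reflect (p : ℕ) (hp : 1 ≤ p) :
    ∏ k ∈ Ioc 0 (p - 1), ((p : ℚ) - k) = ∏ k ∈ Ioc 0 (p - 1), (k : ℚ) := by
  apply Finset.prod_nbij' (fun k => p - k) (fun k => p - k)
  · intro x hx; simp only [mem_Ioc] at *; omega
  · intro x hx; simp only [mem_Ioc] at *; omega
  · intro x hx; simp only [mem_Ioc] at hx; omega
  · intro x hx; simp only [mem_Ioc] at hx; omega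
  · intro x hx; simp only [mem_Ioc] at hx
    have : ((p - x : ℕ) : ℚ) = (p : ℚ) - x := by
      have h : p - x + x = p := by omega
      have := congrArg (Nat.cast : ℕ → ℚ) h
      push_cast at this; linarith
    rw [this]

private lemma lower_prod (p : ℕ) (hp : 1 ≤ p) :
    ∏ k ∈ Ioc 0 (p - 1), (((k : ℚ) + 1) / ((p : ℚ) - k)) = p := by
  obtain ⟨q, rfl⟩ : ∃ q, p = q + 1 := ⟨p - 1, by omega⟩
  rw [Finset.prod_div_distrib]
  have hnum : ∏ k ∈ Ioc 0 (q + 1 - 1), ((k : ℚ) + 1) = (q+1).factorial := by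
    rw [show q + 1 - 1 = q from rfl, reindex_succ 0 q]
    have h : (∏ k ∈ Ioc (0:ℕ) 1, (k:ℚ)) * ∏ k ∈ Ioc 1 (q+1), (k:ℚ) = ∏ k ∈ Ioc 0 (q+1), (k:ℚ) :=
      Finset.prod_Ioc_consecutive _ (by omega) (by omega)
    have h1 : ∏ k ∈ Ioc 0 1, ((k : ℕ) : ℚ) = 1 := by
      rw [Finset.prod_Ioc_succ_top (le_refl 0)]; simp
    rw [h1, one_mul, fact_prod] at h
    rw [show (0:ℕ) + 1 = 1 from rfl]
    exact h
  have hden : ∏ k ∈ Ioc 0 (q + 1 - 1), (((q + 1 : ℕ) : ℚ) - k) = q.factorial := by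
    have h := reindex_reflect (q+1) (by omega)
    rw [show q + 1 - 1 = q from rfl] at h ⊢
    rw [h, fact_prod]
  rw [hnum, hden, Nat.factorial_succ]
  have hq : (q.factorial : ℚ) ≠ 0 := by positivity
  push_cast
  field_simp

private lemma mid_prod (p e : ℕ) (hpe : p + 1 ≤ e) :
    ∏ k ∈ Ioc p (e - 1), (((k : ℚ) + 1) / ((k : ℚ) - p))
      = e.factorial / ((p+1).factorial * (e - 1 - p).factorial) := by
  rw [Finset.prod_div_distrib]
  have hnum : ∏ k ∈ Ioc p (e - 1), ((k : ℚ) + 1) = e.factorial / (p+1).factorial := by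
    rw [reindex_succ p (e-1), show e - 1 + 1 = e from by omega]
    have h : (∏ k ∈ Ioc 0 (p+1), (k:ℚ)) * ∏ k ∈ Ioc (p+1) e, (k:ℚ) = ∏ k ∈ Ioc 0 e, (k:ℚ) :=
      Finset.prod_Ioc_consecutive _ (by omega) hpe
    rw [fact_prod, fact_prod] at h
    have : ((p+1).factorial : ℚ) ≠ 0 := by positivity
    field_simp
    linarith [h]
  have hden : ∏ k ∈ Ioc p (e - 1), ((k : ℚ) - p) = (e - 1 - p).factorial := by
    have := reindex_sub p (e - 1 - p)
    rw [show p + (e - 1 - p) = e - 1 from by omega] at this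
    rw [this, fact_prod]
  rw [hnum, hden, div_div]

private lemma term_bound {c x m : ℚ} (hc : 0 < c) (hm : c < m) (hx : m ≤ x) :
    x / (x - c) ≤ m / (m - c) ∧ (x / (x - c) = m / (m - c) ↔ x = m) := by
  have hx' : c < x := lt_of_lt_of_le hm hx
  have h1 : 0 < x - c := by linarith
  have h2 : 0 < m - c := by linarith
  refine ⟨?_, ?_, fun h => by rw [h]⟩
  · rw [div_le_div_iff₀ h1 h2]; nlinarith
  · intro h
    rw [div_eq_div_iff h1.ne' h2.ne'] at h
    have h5 : c * (m - x) = 0 := by linear_combination h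
    rcases mul_eq_zero.1 h5 with h6 | h6
    · exact absurd h6 hc.ne'
    · linarith

private lemma prod_eq_iff {s : Finset ℕ} {f g : ℕ → ℚ} (hpos : ∀ i ∈ s, 0 < f i)
    (hle : ∀ i ∈ s, f i ≤ g i) :
    (∏ i ∈ s, f i = ∏ i ∈ s, g i) ↔ ∀ i ∈ s, f i = g i := by
  constructor
  · intro h
    by_contra hc
    push_neg at hc
    obtain ⟨j, hj, hne⟩ := hc
    exact absurd h (ne_of_lt (Finset.prod_lt_prod hpos hle
      ⟨j, hj, lt_of_le_of_ne (hle j hj) hne⟩))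
  · exact fun h => Finset.prod_congr rfl h

private lemma extremal_val (p e : ℕ) (hp : 1 ≤ p) (hpe : p + 1 ≤ e) :
    (p : ℚ) * ((e.factorial : ℚ) / ((p+1).factorial * (e - 1 - p).factorial))
      * (((e : ℚ) + 2) / ((e : ℚ) - p + 1))
      = (p : ℚ) * ((e+1).choose (p+1)) - (e.choose (p-1)) := by
  obtain ⟨q, rfl⟩ : ∃ q, p = q + 1 := ⟨p - 1, by omega⟩
  obtain ⟨m, rfl⟩ : ∃ m, e = q + m + 2 := ⟨e - q - 2, by omega⟩
  have hc : (((q+m+2).choose (q+2) : ℕ) : ℚ)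
      = ((q+m+2).factorial : ℚ) / ((q+2).factorial * m.factorial) := by
    rw [Nat.cast_choose ℚ (show q+2 ≤ q+m+2 by omega), show q+m+2 - (q+2) = m from by omega]
  have h3 : ((q+m+3).choose (q+2) : ℚ)
      = ((q+m+2).choose (q+1) : ℚ) + ((q+m+2).choose (q+2) : ℚ) := by
    have := Nat.choose_succ_succ (q+m+2) (q+1)
    exact_mod_cast congrArg (Nat.cast : ℕ → ℚ) this
  have hb1 : ((q+m+2).choose (q+1) : ℚ) * (q+1) = ((q+m+2).choose q : ℚ) * (m+2) := by
    have := Nat.choose_succ_right_eq (q+m+2) q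
    rw [show q+m+2 - q = m+2 from by omega] at this
    exact_mod_cast congrArg (Nat.cast : ℕ → ℚ) this
  have hb2 : ((q+m+2).choose (q+2) : ℚ) * (q+2) = ((q+m+2).choose (q+1) : ℚ) * (m+1) := by
    have := Nat.choose_succ_right_eq (q+m+2) (q+1)
    rw [show q+m+2 - (q+1) = m+1 from by omega] at this
    exact_mod_cast congrArg (Nat.cast : ℕ → ℚ) this
  rw [show q+1+1 = q+2 from rfl, show q+m+2-1-(q+1) = m from by omega,
    show q+1-1 = q from rfl, show q+m+2+1 = q+m+3 from rfl, ← hc]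
  set a : ℚ := ((q+m+2).choose q : ℚ)
  set b : ℚ := ((q+m+2).choose (q+1) : ℚ)
  set c : ℚ := ((q+m+2).choose (q+2) : ℚ)
  set C1 : ℚ := ((q+m+3).choose (q+2) : ℚ)
  have hm2 : ((m : ℚ) + 2) ≠ 0 := by positivity
  have key : ((q:ℚ)+1) * c * ((q:ℚ)+(m:ℚ)+4) = (((q:ℚ)+1) * C1 - a) * ((m:ℚ)+2) := by
    linear_combination (-((m:ℚ)+2)*((q:ℚ)+1))*h3 - hb1 + ((q:ℚ)+1)*hb2
  push_cast
  have expand : ((q:ℚ)+1) * c * (((q:ℚ)+(m:ℚ)+2+2) / ((q:ℚ)+(m:ℚ)+2-((q:ℚ)+1)+1))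
      = (((q:ℚ)+1) * c * ((q:ℚ)+(m:ℚ)+4)) / ((m:ℚ)+2) := by
    ring
  rw [expand, key, mul_div_cancel_right₀ _ hm2]

/-- If `d = (0, d_1, ..., d_e)` is strictly increasing with `d_1 ≥ 2`, `d_e ≥ e+2` (`e ≥ 2`),
and `d_p = p+1` for some `1 ≤ p ≤ e-1`, then
`κ_{p,1}(d) = ∏_{1 ≤ k ≤ e, k ≠ p} d_k/|d_k - d_p| ≤ p·C(e+1,p+1) - C(e,p-1)`, with equality
iff `d = (0, 2, 3, ..., e, e+2)`. -/
theorem stmt_9 (e p : ℕ) (he : 2 ≤ e) (hp1 : 1 ≤ p) (hpe : p ≤ e - 1)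
    (d : ℕ → ℤ) (hd0 : d 0 = 0) (hmono : ∀ k < e, d k < d (k + 1))
    (hd1 : 2 ≤ d 1) (hde : (e : ℤ) + 2 ≤ d e) (hdp : d p = (p : ℤ) + 1) :
    ∏ k ∈ (Finset.Icc 1 e).erase p, ((d k : ℚ) / |(d k : ℚ) - (d p : ℚ)|) ≤
      (p : ℚ) * Nat.choose (e + 1) (p + 1) - Nat.choose e (p - 1)
    ∧ (∏ k ∈ (Finset.Icc 1 e).erase p, ((d k : ℚ) / |(d k : ℚ) - (d p : ℚ)|) =
        (p : ℚ) * Nat.choose (e + 1) (p + 1) - Nat.choose e (p - 1)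
        ↔ (∀ k, 1 ≤ k → k ≤ e - 1 → d k = (k : ℤ) + 1) ∧ d e = (e : ℤ) + 2) := by
  have hpe' : p + 1 ≤ e := by omega
  -- monotonicity gap
  have hgap : ∀ n k, k + n ≤ e → d k + n ≤ d (k + n) := by
    intro n
    induction n with
    | zero => intro k _; simp
    | succ n ih =>
      intro k hk
      have h1 := ih k (by omega)
      have h2 := hmono (k + n) (by omega)
      rw [show k + (n+1) = (k + n) + 1 from by omega]
      push_cast at h1 ⊢
      omega
  have hlow : ∀ k, 1 ≤ k → k ≤ e → (k : ℤ) + 1 ≤ d k := by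
    intro k h1 h2
    have h3 := hgap (k - 1) 1 (by omega)
    rw [show 1 + (k - 1) = k from by omega] at h3
    omega
  have heq : ∀ k, 1 ≤ k → k ≤ p → d k = (k : ℤ) + 1 := by
    intro k h1 h2
    have hl := hlow k h1 (by omega)
    have h3 := hgap (p - k) k (by omega)
    rw [show k + (p - k) = p from by omega, hdp] at h3
    omega
  rw [hdp]
  push_cast
  -- split index set
  have hSplit : (Finset.Icc 1 e).erase p = (Ioc 0 (p-1)) ∪ (Ioc p e) := by
    ext k
    simp only [mem_erase, mem_Icc, mem_union, mem_Ioc]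
    omega
  have hdisj : Disjoint (Ioc 0 (p-1)) (Ioc p e) := by
    rw [Finset.disjoint_left]
    intro k hk hk'
    simp only [mem_Ioc] at hk hk'
    omega
  rw [hSplit, Finset.prod_union hdisj]
  -- lower product
  have hlowprod : ∏ k ∈ Ioc 0 (p-1), ((d k : ℚ) / |(d k : ℚ) - ((p:ℚ) + 1)|) = p := by
    have hcongr : ∏ k ∈ Ioc 0 (p-1), ((d k : ℚ) / |(d k : ℚ) - ((p:ℚ) + 1)|)
        = ∏ k ∈ Ioc 0 (p-1), (((k:ℚ) + 1) / ((p:ℚ) - k)) := by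
      apply Finset.prod_congr rfl
      intro k hk
      simp only [mem_Ioc] at hk
      rw [heq k (by omega) (by omega)]
      push_cast
      have hkp : (k : ℚ) < p := by exact_mod_cast (show (k:ℤ) < p from by exact_mod_cast (by omega : k < p))
      rw [show |(k:ℚ) + 1 - ((p:ℚ) + 1)| = (p:ℚ) - k from by rw [abs_of_nonpos (by linarith)]; ring]
    rw [hcongr, lower_prod p hp1]
  rw [hlowprod]
  -- upper part
  set f : ℕ → ℚ := fun k => (d k : ℚ) / ((d k : ℚ) - ((p:ℚ) + 1)) with hf
  set g : ℕ → ℚ := fun k => if k = e then ((e:ℚ) + 2) / ((e:ℚ) - p + 1)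
    else ((k:ℚ) + 1) / ((k:ℚ) - p) with hg
  have hdgt : ∀ k ∈ Ioc p e, ((p:ℚ) + 1) < (d k : ℚ) := by
    intro k hk
    simp only [mem_Ioc] at hk
    have := hlow k (by omega) hk.2
    have : (p:ℤ) + 1 < d k := by omega
    exact_mod_cast this
  have habs : ∀ k ∈ Ioc p e, (d k : ℚ) / |(d k : ℚ) - ((p:ℚ) + 1)| = f k := by
    intro k hk
    rw [hf]
    rw [abs_of_pos (by linarith [hdgt k hk])]
  have hterm : ∀ k ∈ Ioc p e, (f k ≤ g k ∧ (f k = g k ↔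
      (d k : ℚ) = (if k = e then (e:ℚ) + 2 else (k:ℚ) + 1))) := by
    intro k hk
    simp only [mem_Ioc] at hk
    have hc : (0:ℚ) < (p:ℚ) + 1 := by positivity
    by_cases hke : k = e
    · subst hke
      have hm : ((p:ℚ) + 1) < (k:ℚ) + 2 := by
        have : (p:ℤ) + 1 < (k:ℤ) + 2 := by omega
        exact_mod_cast this
      have hx : (k:ℚ) + 2 ≤ (d k : ℚ) := by exact_mod_cast hde
      obtain ⟨hle, hiff⟩ := term_bound hc hm hx
      rw [show ((k:ℚ) + 2) - ((p:ℚ) + 1) = (k:ℚ) - p + 1 from by ring] at hle hiff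
      simp only [hg, if_pos rfl]
      exact ⟨hle, hiff⟩
    · have hm : ((p:ℚ) + 1) < (k:ℚ) + 1 := by
        have : (p:ℤ) + 1 < (k:ℤ) + 1 := by omega
        exact_mod_cast this
      have hx : (k:ℚ) + 1 ≤ (d k : ℚ) := by exact_mod_cast hlow k (by omega) hk.2
      obtain ⟨hle, hiff⟩ := term_bound hc hm hx
      rw [show ((k:ℚ) + 1) - ((p:ℚ) + 1) = (k:ℚ) - p from by ring] at hle hiff
      simp only [hg, if_neg hke]
      exact ⟨hle, hiff⟩
  have hfpos : ∀ k ∈ Ioc p e, 0 < f k := by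
    intro k hk
    have h1 := hdgt k hk
    rw [hf]
    apply div_pos (by linarith) (by linarith)
  have hfle : ∀ k ∈ Ioc p e, f k ≤ g k := fun k hk => (hterm k hk).1
  -- product of g
  have hgval : ∏ k ∈ Ioc p e, g k
      = ((e.factorial : ℚ) / ((p+1).factorial * (e - 1 - p).factorial))
        * (((e:ℚ) + 2) / ((e:ℚ) - p + 1)) := by
    have hsplit2 := Finset.prod_Ioc_succ_top (show p ≤ e - 1 from hpe) g
    rw [show e - 1 + 1 = e from by omega] at hsplit2
    rw [hsplit2]
    have hmid : ∏ k ∈ Ioc p (e-1), g k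
        = ∏ k ∈ Ioc p (e-1), (((k:ℚ) + 1) / ((k:ℚ) - p)) := by
      apply Finset.prod_congr rfl
      intro k hk
      simp only [mem_Ioc] at hk
      simp only [hg, if_neg (show k ≠ e from by omega)]
    rw [hmid, mid_prod p e hpe']
    simp only [hg, if_pos rfl]
  replace habs := Finset.prod_congr rfl habs
  rw [habs]
  have hmain := extremal_val p e hp1 hpe'
  rw [mul_assoc, ← hgval] at hmain
  have hprodle : ∏ k ∈ Ioc p e, f k ≤ ∏ k ∈ Ioc p e, g k :=
    Finset.prod_le_prod (fun k hk => (hfpos k hk).le) hfle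
  have hp0 : (0:ℚ) < p := by exact_mod_cast hp1
  constructor
  · calc (p:ℚ) * ∏ k ∈ Ioc p e, f k ≤ (p:ℚ) * ∏ k ∈ Ioc p e, g k :=
          mul_le_mul_of_nonneg_left hprodle hp0.le
      _ = _ := hmain
  · rw [← hmain, mul_right_inj' hp0.ne', prod_eq_iff hfpos hfle]
    constructor
    · intro h
      refine ⟨?_, ?_⟩
      · intro k h1k h2k
        by_cases hkp : k ≤ p
        · exact heq k h1k hkp
        · have hk : k ∈ Ioc p e := by simp only [mem_Ioc]; omega
          have h5 := (hterm k hk).2.1 (h k hk)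
          rw [if_neg (show k ≠ e from by omega)] at h5
          exact_mod_cast h5
      · have hk : e ∈ Ioc p e := by simp only [mem_Ioc]; omega
        have h5 := (hterm e hk).2.1 (h e hk)
        rw [if_pos rfl] at h5
        exact_mod_cast h5
    · rintro ⟨h1, h2⟩ k hk
      apply (hterm k hk).2.2
      simp only [mem_Ioc] at hk
      by_cases hke : k = e
      · subst hke; rw [if_pos rfl]; exact_mod_cast h2
      · rw [if_neg hke]
        have h6 := h1 k (by omega) (by omega)
        exact_mod_cast h6
end

section
/- For integers e ≥ 1, q ≥ 1 and 1 ≤ p ≤ e, the Herzog–Kühl product ∏_{1 ≤ k ≤ e, k ≠ p} (q+k)/|k−p| is an integer, namely C(p+q-1, q)·C(e+q, p+q). -/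
theorem aux1 (a m : ℕ) : ∏ j ∈ Finset.Icc 1 m, (((a:ℚ) + j)/j) = ((a+m).choose m : ℕ) := by
  induction m with
  | zero => simp
  | succ n ih =>
    rw [Finset.prod_Icc_succ_top (by omega : 1 ≤ n+1), ih,
      show a+(n+1) = a+n+1 from rfl]
    have h := Nat.add_one_mul_choose_eq (a+n) n
    have hq : ((a+n+1 : ℕ):ℚ) * ((a+n).choose n : ℕ) = (((a+n+1).choose (n+1) : ℕ)) * ((n+1:ℕ):ℚ) := by
      exact_mod_cast congrArg (Nat.cast : ℕ → ℚ) h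
    have hn : ((n:ℚ)+1) ≠ 0 := by positivity
    field_simp
    push_cast at hq ⊢
    linear_combination hq

/-- For `e, q ≥ 1` and `1 ≤ p ≤ e`, the Herzog–Kühl product
`∏_{1 ≤ k ≤ e, k ≠ p} (q+k)/|k-p|` is an integer, namely `C(p+q-1,q)·C(e+q,p+q)`. -/
theorem stmt_11 (e q p : ℕ) (he : 1 ≤ e) (hq : 1 ≤ q) (hp1 : 1 ≤ p) (hpe : p ≤ e) :
    ∏ k ∈ (Finset.Icc 1 e).erase p, (((q : ℚ) + k) / |(k : ℚ) - p|) =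
      ((Nat.choose (p + q - 1) q * Nat.choose (e + q) (p + q) : ℕ) : ℚ) := by
  have hsplit : (Finset.Icc 1 e).erase p = Finset.Icc 1 (p-1) ∪ Finset.Icc (p+1) e := by
    ext k
    simp only [Finset.mem_erase, Finset.mem_Icc, Finset.mem_union]
    omega
  have hdisj : Disjoint (Finset.Icc 1 (p-1)) (Finset.Icc (p+1) e) := by
    simp only [Finset.disjoint_left, Finset.mem_Icc]
    omega
  rw [hsplit, Finset.prod_union hdisj]
  -- first product
  have h1 : ∏ k ∈ Finset.Icc 1 (p-1), (((q : ℚ) + k) / |(k : ℚ) - p|)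
      = ((q+(p-1)).choose (p-1) : ℕ) := by
    have hc : ∀ k ∈ Finset.Icc 1 (p-1), ((q : ℚ) + k) / |(k : ℚ) - p|
        = ((q:ℚ)+k) / ((p:ℚ) - k) := by
      intro k hk
      simp only [Finset.mem_Icc] at hk
      have hk' : (k:ℚ) ≤ (p:ℚ) := Nat.cast_le.mpr (by omega)
      rw [abs_of_nonpos (by linarith), neg_sub]
    rw [Finset.prod_congr rfl hc]
    have hrefl : ∏ k ∈ Finset.Icc 1 (p-1), ((p:ℚ) - k) = ∏ k ∈ Finset.Icc 1 (p-1), (k:ℚ) := by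
      apply Finset.prod_bij' (fun k _ => p - k) (fun k _ => p - k)
      · intro a ha; simp only [Finset.mem_Icc] at ha ⊢; omega
      · intro a ha; simp only [Finset.mem_Icc] at ha ⊢; omega
      · intro a ha; simp only [Finset.mem_Icc] at ha; omega
      · intro a ha; simp only [Finset.mem_Icc] at ha; omega
      · intro a ha; simp only [Finset.mem_Icc] at ha
        rw [Nat.cast_sub (by omega)]
    have hne : ∏ k ∈ Finset.Icc 1 (p-1), (k:ℚ) ≠ 0 := by
      apply Finset.prod_ne_zero_iff.mpr
      intro k hk
      simp only [Finset.mem_Icc] at hk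
      exact Nat.cast_ne_zero.mpr (by omega)
    have ha := aux1 q (p-1)
    rw [Finset.prod_div_distrib] at ha ⊢
    rw [hrefl, ha]
  -- second product
  have h2 : ∏ k ∈ Finset.Icc (p+1) e, (((q : ℚ) + k) / |(k : ℚ) - p|)
      = ((q+p+(e-p)).choose (e-p) : ℕ) := by
    rw [← aux1 (q+p) (e-p)]
    apply Finset.prod_bij' (fun k _ => k - p) (fun j _ => j + p)
    · intro a ha; simp only [Finset.mem_Icc] at ha ⊢; omega
    · intro a ha; simp only [Finset.mem_Icc] at ha ⊢; omega
    · intro a ha; simp only [Finset.mem_Icc] at ha; omega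
    · intro a ha; simp only [Finset.mem_Icc] at ha; omega
    · intro a ha
      simp only [Finset.mem_Icc] at ha
      rw [abs_of_nonneg (by
        have : (p:ℚ) ≤ a := by exact_mod_cast Nat.cast_le.mpr (by omega)
        linarith : (0:ℚ) ≤ (a:ℚ) - p)]
      rw [Nat.cast_sub (by omega)]
      push_cast
      ring
  rw [h1, h2]
  have e1 : (q+(p-1)).choose (p-1) = (p+q-1).choose q := by
    rw [show q+(p-1) = p+q-1 by omega, show p-1 = (p+q-1)-q by omega]
    exact Nat.choose_symm (by omega)
  have e2 : (q+p+(e-p)).choose (e-p) = (e+q).choose (p+q) := by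
    rw [show q+p+(e-p) = e+q by omega, show e-p = (e+q)-(p+q) by omega]
    exact Nat.choose_symm (by omega)
  rw [e1, e2]
  push_cast
  ring
end

section
/- Let q ≥ 1 and e ≥ 1, and let d = (0, d_1, ..., d_e) be a strictly increasing integer sequence with d_1 ≥ q+1. If for some p with 1 ≤ p ≤ e one has ∏_{k≠p} d_k/|d_k − d_p| = C(p+q-1,q)·C(e+q,p+q) and d_p = q+p, then (1/e!)∏_{k=1}^{e} d_k = C(e+q, q). -/
open Finset

lemma aux1_s14 (q m : ℕ) : ∏ k ∈ Icc 1 m, ((q:ℚ)+k) = (Nat.factorial (q+m)) / (Nat.factorial q) := by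
  induction m with
  | zero => simp [div_self (Nat.cast_ne_zero.2 (Nat.factorial_ne_zero q) : (Nat.factorial q:ℚ) ≠ 0)]
  | succ n ih =>
    rw [Finset.prod_Icc_succ_top (by omega), ih, show q+(n+1) = (q+n)+1 from rfl,
      Nat.factorial_succ]
    have h1 : (Nat.factorial q : ℚ) ≠ 0 := Nat.cast_ne_zero.2 (Nat.factorial_ne_zero q)
    push_cast
    field_simp
    ring

lemma aux2a (m : ℕ) : ∏ k ∈ Icc 1 m, (k:ℚ) = Nat.factorial m := by
  induction m with
  | zero => simp
  | succ n ih =>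
    rw [Finset.prod_Icc_succ_top (by omega), ih, Nat.factorial_succ]
    push_cast; ring

lemma aux2 (m : ℕ) : ∏ k ∈ Icc 1 m, ((m:ℚ)+1-k) = Nat.factorial m := by
  rw [← aux2a m]
  refine Finset.prod_nbij' (fun k => m+1-k) (fun k => m+1-k) ?_ ?_ ?_ ?_ ?_ <;>
    intro a ha <;> simp only [Finset.mem_Icc] at * <;> try omega
  have h2 : ((m+1-a:ℕ):ℚ) = (m:ℚ)+1-a := by
    have : a ≤ m+1 := by omega
    push_cast [this]; ring
  rw [h2]

lemma aux3 (p e : ℕ) : ∏ k ∈ Icc (p+1) e, ((k:ℚ) - p) = Nat.factorial (e-p) := by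
  rw [← aux2a (e-p)]
  refine Finset.prod_nbij' (fun k => k-p) (fun k => k+p) ?_ ?_ ?_ ?_ ?_ <;>
    intro a ha <;> simp only [Finset.mem_Icc] at * <;> try omega
  have : p ≤ a := by omega
  push_cast [this]
  ring

lemma auxmax (e q p : ℕ) (hq : 1 ≤ q) (hp1 : 1 ≤ p) (hpe : p ≤ e) :
    ∏ k ∈ (Icc 1 e).erase p, (((q:ℚ)+k)/|(k:ℚ)-(p:ℚ)|) =
      (Nat.choose (p + q - 1) q : ℚ) * Nat.choose (e + q) (p + q) := by
  have hq0 : (Nat.factorial q : ℚ) ≠ 0 := Nat.cast_ne_zero.2 (Nat.factorial_ne_zero _)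
  have hqp0 : (Nat.factorial (q+p) : ℚ) ≠ 0 := Nat.cast_ne_zero.2 (Nat.factorial_ne_zero _)
  have hp10 : (Nat.factorial (p-1) : ℚ) ≠ 0 := Nat.cast_ne_zero.2 (Nat.factorial_ne_zero _)
  have hep0 : (Nat.factorial (e-p) : ℚ) ≠ 0 := Nat.cast_ne_zero.2 (Nat.factorial_ne_zero _)
  have hset : (Icc 1 e).erase p = Icc 1 (p-1) ∪ Icc (p+1) e := by
    ext k; simp only [Finset.mem_erase, Finset.mem_Icc, Finset.mem_union]; omega
  have hdisj : Disjoint (Icc 1 (p-1)) (Icc (p+1) e) := by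
    simp only [Finset.disjoint_left, Finset.mem_Icc]; omega
  rw [hset, Finset.prod_union hdisj]
  -- first block
  have h1 : ∏ k ∈ Icc 1 (p-1), (((q:ℚ)+k)/|(k:ℚ)-(p:ℚ)|) =
      (Nat.factorial (q+(p-1)) / Nat.factorial q) / Nat.factorial (p-1) := by
    have hc : ∀ k ∈ Icc 1 (p-1), (((q:ℚ)+k)/|(k:ℚ)-(p:ℚ)|) =
        ((q:ℚ)+k)/(((p-1:ℕ):ℚ)+1-k) := by
      intro k hk
      simp only [Finset.mem_Icc] at hk
      have hkp : (k:ℚ) ≤ p := by exact_mod_cast (by omega : k ≤ p)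
      have habs : |(k:ℚ)-(p:ℚ)| = (p:ℚ)-k := by
        rw [abs_sub_comm, abs_of_nonneg (by linarith)]
      rw [habs]
      congr 1
      push_cast [show 1 ≤ p from hp1]
      ring
    rw [Finset.prod_congr rfl hc, Finset.prod_div_distrib, aux1_s14, aux2]
  -- second block
  have hnum2 : ∏ k ∈ Icc (p+1) e, ((q:ℚ)+k) =
      Nat.factorial (q+e) / Nat.factorial (q+p) := by
    have hsplit : Icc 1 e = Icc 1 p ∪ Icc (p+1) e := by
      ext k; simp only [Finset.mem_Icc, Finset.mem_union]; omega
    have hdisj2 : Disjoint (Icc 1 p) (Icc (p+1) e) := by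
      simp only [Finset.disjoint_left, Finset.mem_Icc]; omega
    have h := aux1_s14 q e
    rw [hsplit, Finset.prod_union hdisj2, aux1_s14 q p] at h
    field_simp at h ⊢
    linarith [h]
  have h2 : ∏ k ∈ Icc (p+1) e, (((q:ℚ)+k)/|(k:ℚ)-(p:ℚ)|) =
      (Nat.factorial (q+e) / Nat.factorial (q+p)) / Nat.factorial (e-p) := by
    have hc : ∀ k ∈ Icc (p+1) e, (((q:ℚ)+k)/|(k:ℚ)-(p:ℚ)|) =
        ((q:ℚ)+k)/((k:ℚ)-(p:ℚ)) := by
      intro k hk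
      simp only [Finset.mem_Icc] at hk
      have hkp : (p:ℚ) ≤ k := by exact_mod_cast (by omega : p ≤ k)
      rw [abs_of_nonneg (by linarith)]
    rw [Finset.prod_congr rfl hc, Finset.prod_div_distrib, hnum2, aux3]
  rw [h1, h2]
  rw [Nat.cast_choose ℚ (show q ≤ p+q-1 by omega), Nat.cast_choose ℚ (show p+q ≤ e+q by omega)]
  rw [show p+q-1-q = p-1 by omega, show p+q-1 = q+(p-1) by omega,
    show e+q-(p+q) = e-p by omega, show e+q = q+e by omega, show p+q = q+p by omega]
  field_simp

/-- If `d = (0, d_1, ..., d_e)` is strictly increasing with `d_1 ≥ q+1` (`e, q ≥ 1`), and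
for some `1 ≤ p ≤ e` one has `d_p = q+p` and
`∏_{k ≠ p} d_k/|d_k - d_p| = C(p+q-1,q)·C(e+q,p+q)`, then `(1/e!) ∏_{k=1}^e d_k = C(e+q,q)`. -/
theorem stmt_14 (e q p : ℕ) (he : 1 ≤ e) (hq : 1 ≤ q) (hp1 : 1 ≤ p) (hpe : p ≤ e)
    (d : ℕ → ℤ) (hd0 : d 0 = 0) (hmono : ∀ k < e, d k < d (k + 1))
    (hd1 : (q : ℤ) + 1 ≤ d 1) (hdp : d p = (q : ℤ) + p)
    (hmax : ∏ k ∈ (Finset.Icc 1 e).erase p, ((d k : ℚ) / |(d k : ℚ) - (d p : ℚ)|) =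
      (Nat.choose (p + q - 1) q : ℚ) * Nat.choose (e + q) (p + q)) :
    (1 / (Nat.factorial e : ℚ)) * ∏ k ∈ Finset.Icc 1 e, (d k : ℚ) =
      Nat.choose (e + q) q := by
  -- gap lemma: strict increase forces d b ≥ d a + (b - a)
  have gap : ∀ b, b ≤ e → ∀ a, a ≤ b → d a + (b - a : ℕ) ≤ d b := by
    intro b
    induction b with
    | zero => intro _ a ha; interval_cases a; simp
    | succ n ih =>
      intro hbe a ha
      rcases Nat.lt_succ_iff_lt_or_eq.mp (Nat.lt_succ_of_le ha) with h | h
      · rcases Nat.lt_succ_iff.mp h with h'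
        have h1 := ih (by omega) a h'
        have h2 := hmono n (by omega)
        omega
      · subst h; simp
  -- lower bound d k ≥ q + k for 1 ≤ k ≤ e
  have hlow : ∀ k, 1 ≤ k → k ≤ e → (q:ℤ) + k ≤ d k := by
    intro k hk1 hke
    have := gap k hke 1 hk1
    omega
  -- all values forced
  have hall : ∀ k, 1 ≤ k → k ≤ e → d k = (q:ℤ) + k := by
    intro k hk1 hke
    rcases le_or_gt k p with hkp | hpk
    · -- k ≤ p : squeeze
      have h1 := hlow k hk1 hke
      have h2 := gap p (by omega) k hkp
      omega
    · -- k > p : use the product equality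
      by_contra hne
      have hstrict : (q:ℤ) + k < d k := lt_of_le_of_ne (hlow k hk1 hke) (Ne.symm hne)
      -- define comparison functions
      set s := (Finset.Icc 1 e).erase p with hs
      have hkmem : k ∈ s := by
        simp only [hs, Finset.mem_erase, Finset.mem_Icc]
        omega
      have key : ∀ j ∈ s, ((d j : ℚ) / |(d j : ℚ) - (d p : ℚ)|) ≤ ((q:ℚ)+j)/|(j:ℚ)-(p:ℚ)| ∧
          0 < ((d j : ℚ) / |(d j : ℚ) - (d p : ℚ)|) := by
        intro j hj
        simp only [hs, Finset.mem_erase, Finset.mem_Icc] at hj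
        obtain ⟨hjp, hj1, hje⟩ := hj
        have hdjpos : (0:ℤ) < d j := by have := hlow j hj1 hje; omega
        have hdjQ : (0:ℚ) < (d j : ℚ) := by exact_mod_cast hdjpos
        rcases lt_or_gt_of_ne hjp with hjlt | hjgt
        · -- j < p: equality of factors
          have hdj : d j = (q:ℤ) + j := by
            have h1 := hlow j hj1 hje
            have h2 := gap p (by omega) j (by omega)
            omega
          have habs : |(d j : ℚ) - (d p : ℚ)| = |(j:ℚ)-(p:ℚ)| := by
            rw [hdj, hdp]; push_cast; congr 1; ring
          have habspos : (0:ℚ) < |(j:ℚ)-(p:ℚ)| := by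
            have : (j:ℚ) ≠ (p:ℚ) := by exact_mod_cast (by omega : (j:ℤ) ≠ p)
            exact abs_pos.2 (sub_ne_zero.2 this)
          constructor
          · rw [habs, hdj]; push_cast
            exact le_rfl
          · rw [habs]; exact div_pos hdjQ habspos
        · -- j > p
          have hdjlow : (q:ℤ) + j ≤ d j := hlow j hj1 hje
          have hdplt : d p < d j := by rw [hdp]; omega
          have hdpltQ : ((d p):ℚ) < (d j:ℚ) := by exact_mod_cast hdplt
          have habs : |(d j : ℚ) - (d p : ℚ)| = (d j : ℚ) - (d p : ℚ) := by
            rw [abs_of_nonneg (by linarith)]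
          have habs2 : |(j:ℚ)-(p:ℚ)| = (j:ℚ)-(p:ℚ) := by
            rw [abs_of_nonneg]
            have : (p:ℚ) ≤ j := by exact_mod_cast (by omega : p ≤ j)
            linarith
          have hjpQ : (0:ℚ) < (j:ℚ)-(p:ℚ) := by
            have : (p:ℚ) < j := by exact_mod_cast (by omega : p < j)
            linarith
          have hxc : (0:ℚ) < (d j : ℚ) - (d p : ℚ) := by linarith
          have hlowQ : ((q:ℚ)+j) ≤ (d j : ℚ) := by exact_mod_cast hdjlow
          have hdpQ : ((d p):ℚ) = (q:ℚ) + p := by rw [hdp]; push_cast; ring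
          constructor
          · rw [habs, habs2, div_le_div_iff₀ hxc hjpQ]
            have hc : (0:ℚ) < (q:ℚ) + p := by positivity
            nlinarith [hlowQ, hdpQ]
          · rw [habs]; positivity
      have hstrictQ : ((d k : ℚ) / |(d k : ℚ) - (d p : ℚ)|) < ((q:ℚ)+k)/|(k:ℚ)-(p:ℚ)| := by
        have hdklow : (q:ℤ) + k < d k := hstrict
        have hdplt : d p < d k := by rw [hdp]; omega
        have habs : |(d k : ℚ) - (d p : ℚ)| = (d k : ℚ) - (d p : ℚ) := by
          rw [abs_of_nonneg]
          have : ((d p):ℚ) < (d k:ℚ) := by exact_mod_cast hdplt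
          linarith
        have habs2 : |(k:ℚ)-(p:ℚ)| = (k:ℚ)-(p:ℚ) := by
          rw [abs_of_nonneg]
          have : (p:ℚ) ≤ k := by exact_mod_cast (by omega : p ≤ k)
          linarith
        have hjpQ : (0:ℚ) < (k:ℚ)-(p:ℚ) := by
          have : (p:ℚ) < k := by exact_mod_cast hpk
          linarith
        have hxc : (0:ℚ) < (d k : ℚ) - (d p : ℚ) := by
          have : ((d p):ℚ) < (d k:ℚ) := by exact_mod_cast hdplt
          linarith
        have hlowQ : ((q:ℚ)+k) < (d k : ℚ) := by exact_mod_cast hdklow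
        have hdpQ : ((d p):ℚ) = (q:ℚ) + p := by rw [hdp]; push_cast; ring
        rw [habs, habs2, div_lt_div_iff₀ hxc hjpQ]
        have hc : (0:ℚ) < (q:ℚ) + p := by positivity
        nlinarith [hlowQ, hdpQ]
      have hlt : ∏ j ∈ s, ((d j : ℚ) / |(d j : ℚ) - (d p : ℚ)|) <
          ∏ j ∈ s, (((q:ℚ)+j)/|(j:ℚ)-(p:ℚ)|) :=
        Finset.prod_lt_prod (fun j hj => (key j hj).2) (fun j hj => (key j hj).1)
          ⟨k, hkmem, hstrictQ⟩
      rw [hmax, auxmax e q p hq hp1 hpe] at hlt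
      exact lt_irrefl _ hlt
  -- final computation
  have hrw : ∏ k ∈ Finset.Icc 1 e, (d k : ℚ) = ∏ k ∈ Finset.Icc 1 e, ((q:ℚ)+k) := by
    refine Finset.prod_congr rfl fun k hk => ?_
    simp only [Finset.mem_Icc] at hk
    rw [hall k hk.1 hk.2]; push_cast; ring
  rw [hrw, aux1_s14, Nat.cast_choose ℚ (show q ≤ e+q by omega),
    show e+q-q = e by omega, show e+q = q+e by omega]
  have h1 : (Nat.factorial q : ℚ) ≠ 0 := Nat.cast_ne_zero.2 (Nat.factorial_ne_zero _)
  have h2 : (Nat.factorial e : ℚ) ≠ 0 := Nat.cast_ne_zero.2 (Nat.factorial_ne_zero _)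
  rw [one_div, inv_mul_eq_div, div_div]
end

section
/- Let S be a polynomial ring over a field and let 0 → K → A → B → 0 be a short exact sequence of finitely generated graded S-modules. If K_ℓ = 0 for all ℓ ≤ q, then for every p ≥ 0 the induced map Tor_p^S(A, k)_{p+q} → Tor_p^S(B, k)_{p+q} is injective; in particular β_{p,q}(A) ≤ β_{p,q}(B). -/
open TensorProduct

/-- The Koszul differential `E ⊗ M_q → E ⊗ M_{q+1}` on `E := ExteriorAlgebra k V` tensored
with a graded piece, given by `ω ⊗ m ↦ ∑_i (x_i^* ⌋ ω) ⊗ (x_i • m)` for a basis `b` of the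
space `V` of linear forms, where `a` is the multiplication action of `V` raising the internal
degree by one. Restricted to `⋀^p V ⊗ M_q → ⋀^{p-1} V ⊗ M_{q+1}` it is the Koszul-type
complex computing the Koszul cohomology `K_{p,q}(M, V) = Tor_p^S(M, k)_{p+q}`. -/
noncomputable def koszulDiff (k : Type*) [Field k] {V : Type*} [AddCommGroup V] [Module k V]
    {ι : Type*} [Fintype ι] [DecidableEq ι] (b : Module.Basis ι k V)
    {M N : Type*} [AddCommGroup M] [Module k M] [AddCommGroup N] [Module k N]
    (a : V →ₗ[k] M →ₗ[k] N) :
    (ExteriorAlgebra k V ⊗[k] M) →ₗ[k] (ExteriorAlgebra k V ⊗[k] N) :=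
  ∑ i, TensorProduct.map
    (CliffordAlgebra.contractLeft (Q := (0 : QuadraticForm k V)) (b.coord i)) (a (b i))

/-- The image of `⋀^p V ⊗ M` inside `ExteriorAlgebra k V ⊗ M`. -/
noncomputable def wedgePart (k : Type*) [Field k] (V : Type*) [AddCommGroup V] [Module k V]
    (p : ℕ) (M : Type*) [AddCommGroup M] [Module k M] :
    Submodule k (ExteriorAlgebra k V ⊗[k] M) :=
  LinearMap.range (TensorProduct.map ((⋀[k]^p V).subtype) (LinearMap.id (R := k) (M := M)))

/-- The graded Betti number `β_{p,q}(M) = dim_k Tor_p^S(M,k)_{p+q} = κ_{p,q}(M,V)`, computed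
as the Koszul cohomology at the middle of `⋀^{p+1}V ⊗ M_{q-1} → ⋀^p V ⊗ M_q → ⋀^{p-1}V ⊗ M_{q+1}`:
here `Mp, Mc, Mn` are the graded pieces of `M` in internal degrees `q-1, q, q+1`, and
`aprev, acur` are the multiplication maps by linear forms. -/
noncomputable def koszulBetti (k : Type*) [Field k] {V : Type*} [AddCommGroup V] [Module k V]
    {ι : Type*} [Fintype ι] [DecidableEq ι] (b : Module.Basis ι k V)
    {Mp Mc Mn : Type*} [AddCommGroup Mp] [Module k Mp] [AddCommGroup Mc] [Module k Mc]
    [AddCommGroup Mn] [Module k Mn]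
    (aprev : V →ₗ[k] Mp →ₗ[k] Mc) (acur : V →ₗ[k] Mc →ₗ[k] Mn) (p : ℕ) : ℕ :=
  let Z : Submodule k (ExteriorAlgebra k V ⊗[k] Mc) :=
    wedgePart k V p Mc ⊓ LinearMap.ker (koszulDiff k b acur)
  let B : Submodule k (ExteriorAlgebra k V ⊗[k] Mc) :=
    Submodule.map (koszulDiff k b aprev) (wedgePart k V (p + 1) Mp)
  letI : AddCommGroup (ExteriorAlgebra k V ⊗[k] Mc) := TensorProduct.addCommGroup
  Module.finrank k (↥Z ⧸ Submodule.comap Z.subtype B)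

/-!
Since `K` vanishes in degree `q + 1`, exactness makes `π (q + 1)` injective, and `π q` is
surjective. The Koszul differentials commute with `id ⊗ π`, so the boundaries of `B` are the
image of those of `A`; as `id ⊗ π (q + 1)` stays injective (everything is flat over a field), a
cycle of `A` that becomes a boundary in `B` was already a boundary of `A`. Hence the induced map
on Koszul cohomology is injective, which bounds the Betti numbers.
-/

theorem Submodule.finrank_subquotient_le {k E F : Type*} [Field k] [AddCommGroup E] [Module k E]
    [AddCommGroup F] [Module k F] (T : E →ₗ[k] F) {Z B : Submodule k E} {Z' B' : Submodule k F}
    [FiniteDimensional k Z'] (hZ : Z ≤ Z'.comap T) (hB : B ≤ B'.comap T)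
    (hT : Z ⊓ B'.comap T ≤ B) :
    Module.finrank k (Z ⧸ B.comap Z.subtype) ≤
      Module.finrank k (Z' ⧸ B'.comap Z'.subtype) := by
  let φ : Z →ₗ[k] Z' := T.restrict fun x hx => hZ hx
  let g := (B.comap Z.subtype).mapQ (B'.comap Z'.subtype) φ fun x hx => hB hx
  refine LinearMap.finrank_le_finrank_of_injective (f := g) ?_
  rw [← LinearMap.ker_eq_bot]
  refine Submodule.ker_liftQ_eq_bot _ _ _ fun x hx => ?_
  rw [LinearMap.mem_ker, LinearMap.comp_apply, Submodule.mkQ_apply,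
    Submodule.Quotient.mk_eq_zero] at hx
  exact hT ⟨x.2, hx⟩

section Koszul

variable {k : Type*} [Field k] {V : Type*} [AddCommGroup V] [Module k V]
  {ι : Type*} [Fintype ι] [DecidableEq ι] (b : Module.Basis ι k V)
  {M N Mp Mc Mn Np Nc Nn : Type*}
  [AddCommGroup M] [Module k M] [AddCommGroup N] [Module k N]
  [AddCommGroup Mp] [Module k Mp] [AddCommGroup Mc] [Module k Mc] [AddCommGroup Mn] [Module k Mn]
  [AddCommGroup Np] [Module k Np] [AddCommGroup Nc] [Module k Nc] [AddCommGroup Nn] [Module k Nn]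

local notation "Λ" => ExteriorAlgebra k V

theorem lTensor_comp_koszulDiff {a : V →ₗ[k] Mp →ₗ[k] Mc} {a' : V →ₗ[k] Np →ₗ[k] Nc}
    {f : Mp →ₗ[k] Np} {g : Mc →ₗ[k] Nc} (h : ∀ v m, g (a v m) = a' v (f m)) :
    g.lTensor Λ ∘ₗ koszulDiff k b a = koszulDiff k b a' ∘ₗ f.lTensor Λ := by
  have hi : ∀ v, g ∘ₗ a v = a' v ∘ₗ f := fun v => LinearMap.ext (h v)
  refine LinearMap.ext fun x => ?_
  simp only [koszulDiff, LinearMap.comp_apply, LinearMap.sum_apply, map_sum]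
  refine Finset.sum_congr rfl fun i _ => ?_
  rw [← LinearMap.comp_apply, ← LinearMap.comp_apply, LinearMap.lTensor_comp_map,
    LinearMap.map_comp_lTensor, hi]

theorem map_lTensor_wedgePart_le (f : M →ₗ[k] N) (p : ℕ) :
    (wedgePart k V p M).map (f.lTensor Λ) ≤ wedgePart k V p N := by
  rw [wedgePart, wedgePart, ← LinearMap.range_comp, ← LinearMap.rTensor,
    LinearMap.lTensor_comp_rTensor, ← LinearMap.rTensor_comp_lTensor]
  exact LinearMap.range_comp_le_range _ _

theorem map_lTensor_wedgePart_of_surjective {f : M →ₗ[k] N} (hf : Function.Surjective f)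
    (p : ℕ) : (wedgePart k V p M).map (f.lTensor Λ) = wedgePart k V p N := by
  rw [wedgePart, wedgePart, ← LinearMap.range_comp, ← LinearMap.rTensor,
    LinearMap.lTensor_comp_rTensor, ← LinearMap.rTensor_comp_lTensor, LinearMap.rTensor,
    LinearMap.range_comp_of_range_eq_top]
  exact LinearMap.range_eq_top.mpr (LinearMap.lTensor_surjective _ hf)

instance [FiniteDimensional k V] [FiniteDimensional k M] (p : ℕ) :
    FiniteDimensional k (wedgePart k V p M) :=
  LinearMap.finiteDimensional_range (V := ⋀[k]^p V ⊗[k] M) _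

noncomputable def koszulCycles (acur : V →ₗ[k] Mc →ₗ[k] Mn) (p : ℕ) :
    Submodule k (Λ ⊗[k] Mc) :=
  wedgePart k V p Mc ⊓ LinearMap.ker (koszulDiff k b acur)

noncomputable def koszulBoundaries (aprev : V →ₗ[k] Mp →ₗ[k] Mc) (p : ℕ) :
    Submodule k (Λ ⊗[k] Mc) :=
  (wedgePart k V (p + 1) Mp).map (koszulDiff k b aprev)

variable {aprev : V →ₗ[k] Mp →ₗ[k] Mc} {acur : V →ₗ[k] Mc →ₗ[k] Mn}
  {bprev : V →ₗ[k] Np →ₗ[k] Nc} {bcur : V →ₗ[k] Nc →ₗ[k] Nn}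
  {fp : Mp →ₗ[k] Np} {fc : Mc →ₗ[k] Nc} {fn : Mn →ₗ[k] Nn}

theorem koszulCycles_le_comap_lTensor (hc : ∀ v m, fn (acur v m) = bcur v (fc m)) (p : ℕ) :
    koszulCycles b acur p ≤ (koszulCycles b bcur p).comap (fc.lTensor Λ) := by
  rintro x ⟨hx, hdx⟩
  refine ⟨map_lTensor_wedgePart_le fc p ⟨x, hx, rfl⟩, ?_⟩
  rw [SetLike.mem_coe, LinearMap.mem_ker] at hdx ⊢
  rw [← LinearMap.comp_apply, ← lTensor_comp_koszulDiff b hc, LinearMap.comp_apply, hdx,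
    map_zero]

theorem map_lTensor_koszulBoundaries (hp : ∀ v m, fc (aprev v m) = bprev v (fp m)) (p : ℕ) :
    (koszulBoundaries b aprev p).map (fc.lTensor Λ) =
      ((wedgePart k V (p + 1) Mp).map (fp.lTensor Λ)).map (koszulDiff k b bprev) := by
  rw [koszulBoundaries, ← Submodule.map_comp, lTensor_comp_koszulDiff b hp, Submodule.map_comp]

theorem koszulBoundaries_le_comap_lTensor (hp : ∀ v m, fc (aprev v m) = bprev v (fp m))
    (p : ℕ) : koszulBoundaries b aprev p ≤ (koszulBoundaries b bprev p).comap (fc.lTensor Λ) := by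
  rw [← Submodule.map_le_iff_le_comap, map_lTensor_koszulBoundaries b hp]
  exact Submodule.map_mono (map_lTensor_wedgePart_le fp (p + 1))

theorem comap_lTensor_koszulBoundaries (hp : ∀ v m, fc (aprev v m) = bprev v (fp m))
    (hfp : Function.Surjective fp) (hfc : Function.Injective fc) (p : ℕ) :
    (koszulBoundaries b bprev p).comap (fc.lTensor Λ) = koszulBoundaries b aprev p := by
  have hinj : Function.Injective (fc.lTensor Λ) :=
    Module.Flat.lTensor_preserves_injective_linearMap fc hfc
  rw [koszulBoundaries, ← map_lTensor_wedgePart_of_surjective hfp,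
    ← map_lTensor_koszulBoundaries b hp, Submodule.comap_map_eq_of_injective hinj]

theorem koszulBetti_le_of_surjective_of_injective [FiniteDimensional k V]
    [FiniteDimensional k Nc] (hp : ∀ v m, fc (aprev v m) = bprev v (fp m))
    (hc : ∀ v m, fn (acur v m) = bcur v (fc m)) (hfp : Function.Surjective fp)
    (hfc : Function.Injective fc) (p : ℕ) :
    koszulBetti k b aprev acur p ≤ koszulBetti k b bprev bcur p := by
  have : FiniteDimensional k (koszulCycles b bcur p) :=
    Submodule.finiteDimensional_of_le inf_le_left
  exact Submodule.finrank_subquotient_le (fc.lTensor Λ) (koszulCycles_le_comap_lTensor b hc p)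
    (koszulBoundaries_le_comap_lTensor b hp p)
    (inf_le_right.trans (comap_lTensor_koszulBoundaries b hp hfp hfc p).le)

end Koszul

theorem stmt_16_general (k : Type*) [Field k] {V : Type*} [AddCommGroup V] [Module k V]
    [FiniteDimensional k V]
    {ι : Type*} [Fintype ι] [DecidableEq ι] (b : Module.Basis ι k V)
    (K A B : ℤ → Type*)
    [∀ q, AddCommGroup (K q)] [∀ q, Module k (K q)]
    [∀ q, AddCommGroup (A q)] [∀ q, Module k (A q)]
    [∀ q, AddCommGroup (B q)] [∀ q, Module k (B q)] [∀ q, FiniteDimensional k (B q)]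
    (aA : ∀ q : ℤ, V →ₗ[k] A q →ₗ[k] A (q + 1))
    (aB : ∀ q : ℤ, V →ₗ[k] B q →ₗ[k] B (q + 1))
    (iK : ∀ q : ℤ, K q →ₗ[k] A q) (π : ∀ q : ℤ, A q →ₗ[k] B q)
    (hπ_surj : ∀ q, Function.Surjective (π q))
    (hexact : ∀ q : ℤ, LinearMap.ker (π q) = LinearMap.range (iK q))
    (hπ_compat : ∀ (q : ℤ) (v : V) (m : A q), π (q+1) (aA q v m) = aB q v (π q m))
    (q : ℤ) (hK : ∀ ℓ : ℤ, ℓ ≤ q + 1 → ∀ x : K ℓ, x = 0) (p : ℕ) :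
    (∀ x ∈ wedgePart k V p (A (q+1)) ⊓ LinearMap.ker (koszulDiff k b (aA (q+1))),
        (TensorProduct.map LinearMap.id (π (q+1))) x ∈
          Submodule.map (koszulDiff k b (aB q)) (wedgePart k V (p + 1) (B q)) →
        x ∈ Submodule.map (koszulDiff k b (aA q)) (wedgePart k V (p + 1) (A q)))
    ∧ koszulBetti k b (aA q) (aA (q+1)) p ≤ koszulBetti k b (aB q) (aB (q+1)) p := by
  have hπ_inj : Function.Injective (π (q + 1)) := by
    rw [← LinearMap.ker_eq_bot, hexact, LinearMap.range_eq_bot]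
    exact LinearMap.ext fun x => by rw [hK (q + 1) le_rfl x, map_zero, LinearMap.zero_apply]
  have hboundaries := comap_lTensor_koszulBoundaries b (hπ_compat q) (hπ_surj q) hπ_inj p
  exact ⟨fun x _ hx => hboundaries.le hx,
    koszulBetti_le_of_surjective_of_injective b (hπ_compat q) (hπ_compat (q + 1)) (hπ_surj q)
      hπ_inj p⟩

/-- Let `S = Sym V` be a polynomial ring over a field `k` and `0 → K → A → B → 0` a short
exact sequence of finitely generated graded `S`-modules (given by graded pieces with
multiplication actions and degree-preserving maps `iK, π`). If `K_ℓ = 0` for all `ℓ ≤ q+1`,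
then for every `p ≥ 0` the induced map `Tor_p(A,k)_{p+q+1} → Tor_p(B,k)_{p+q+1}` on Koszul
cohomology (with middle term `⋀^p V ⊗ A_{q+1}`) is injective: every cycle of `A` mapping to
a boundary of `B` is a boundary of `A`. In particular `β_{p,q+1}(A) ≤ β_{p,q+1}(B)`. -/
theorem stmt_16 (k : Type*) [Field k] {V : Type*} [AddCommGroup V] [Module k V]
    [FiniteDimensional k V]
    {ι : Type*} [Fintype ι] [DecidableEq ι] (b : Module.Basis ι k V)
    (K A B : ℤ → Type*)
    [∀ q, AddCommGroup (K q)] [∀ q, Module k (K q)] [∀ q, FiniteDimensional k (K q)]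
    [∀ q, AddCommGroup (A q)] [∀ q, Module k (A q)] [∀ q, FiniteDimensional k (A q)]
    [∀ q, AddCommGroup (B q)] [∀ q, Module k (B q)] [∀ q, FiniteDimensional k (B q)]
    (aK : ∀ q : ℤ, V →ₗ[k] K q →ₗ[k] K (q + 1))
    (aA : ∀ q : ℤ, V →ₗ[k] A q →ₗ[k] A (q + 1))
    (aB : ∀ q : ℤ, V →ₗ[k] B q →ₗ[k] B (q + 1))
    (hcommA : ∀ (q : ℤ) (s u : V) (m : A q), aA (q+1) s (aA q u m) = aA (q+1) u (aA q s m))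
    (hfgA : ∃ q₀ : ℤ, ∀ q < q₀, ∀ m : A q, m = 0)
    (hfgB : ∃ q₀ : ℤ, ∀ q < q₀, ∀ m : B q, m = 0)
    (iK : ∀ q : ℤ, K q →ₗ[k] A q) (π : ∀ q : ℤ, A q →ₗ[k] B q)
    (hiK_inj : ∀ q, Function.Injective (iK q))
    (hπ_surj : ∀ q, Function.Surjective (π q))
    (hexact : ∀ q : ℤ, LinearMap.ker (π q) = LinearMap.range (iK q))
    (hiK_compat : ∀ (q : ℤ) (v : V) (m : K q), iK (q+1) (aK q v m) = aA q v (iK q m))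
    (hπ_compat : ∀ (q : ℤ) (v : V) (m : A q), π (q+1) (aA q v m) = aB q v (π q m))
    (q : ℤ) (hK : ∀ ℓ : ℤ, ℓ ≤ q + 1 → ∀ x : K ℓ, x = 0) (p : ℕ) :
    (∀ x ∈ wedgePart k V p (A (q+1)) ⊓ LinearMap.ker (koszulDiff k b (aA (q+1))),
        (TensorProduct.map LinearMap.id (π (q+1))) x ∈
          Submodule.map (koszulDiff k b (aB q)) (wedgePart k V (p + 1) (B q)) →
        x ∈ Submodule.map (koszulDiff k b (aA q)) (wedgePart k V (p + 1) (A q)))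
    ∧ koszulBetti k b (aA q) (aA (q+1)) p ≤ koszulBetti k b (aB q) (aB (q+1)) p :=
  stmt_16_general k b K A B aA aB iK π hπ_surj hexact hπ_compat q hK p
end
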